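/- arXiv:1909.11746 — 6 statements merged into one kernel-verified Lean document; each statement's English description precedes it below -/
import Mathlib

section
/- Let G_ε(x) = 2xε / (1 − x + ε(1+x) + √((1 − x + ε(1+x))² − 4(1−x)xε)) for x ≥ 0 and ε > 0 (the Goldbeter–Koshland function). Then for every x ∈ [0,1), G_ε(x) → 0 as ε → 0⁺, and for every x > 1, G_ε(x) → 1 as ε → 0⁺. -/
/-!
Multiplying numerator and denominator by the conjugate `A - √D`, where
`A = 1 - x + ε(1 + x)` and `D = A² - 4(1 - x)xε`, turns `G_ε(x)` into
`(A - √D) / (2(1 - x))` for `x ≠ 1`, a continuous function of `ε` whose value at `ε = 0`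
is `((1 - x) - |1 - x|) / (2(1 - x))`, that is `0` for `x < 1` and `1` for `x > 1`.
-/

open Filter Topology

/-- The Goldbeter–Koshland function. -/
noncomputable def GK (ε x : ℝ) : ℝ :=
  2 * x * ε /
    (1 - x + ε * (1 + x) + Real.sqrt ((1 - x + ε * (1 + x)) ^ 2 - 4 * (1 - x) * x * ε))

noncomputable def gkConj (ε x : ℝ) : ℝ :=
  (1 - x + ε * (1 + x) - Real.sqrt ((1 - x + ε * (1 + x)) ^ 2 - 4 * (1 - x) * x * ε)) /
    (2 * (1 - x))

section

variable {ε x : ℝ}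

/-- If `A ≤ 0` then `x > 1`, so `D > A²` and `√D > |A|`. -/
lemma GK_denom_pos (hx : 0 ≤ x) (hε : 0 < ε) :
    0 < 1 - x + ε * (1 + x) + Real.sqrt ((1 - x + ε * (1 + x)) ^ 2 - 4 * (1 - x) * x * ε) := by
  set A := 1 - x + ε * (1 + x)
  by_cases hA : 0 < A
  · positivity
  have hx1 : 1 < x := by nlinarith
  have hsq : A ^ 2 < A ^ 2 - 4 * (1 - x) * x * ε := by nlinarith [mul_pos (by linarith : 0 < x) hε]
  have hsqrt : |A| < Real.sqrt (A ^ 2 - 4 * (1 - x) * x * ε) :=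
    Real.sqrt_sq_eq_abs A ▸ Real.sqrt_lt_sqrt (sq_nonneg A) hsq
  linarith [neg_abs_le A]

lemma GK_eq_gkConj (hx : 0 ≤ x) (hx1 : x ≠ 1) (hε : 0 < ε)
    (hD : 0 ≤ (1 - x + ε * (1 + x)) ^ 2 - 4 * (1 - x) * x * ε) : GK ε x = gkConj ε x := by
  have h2 : 2 * (1 - x) ≠ 0 := by intro h; exact hx1 (by linarith)
  rw [GK, gkConj, div_eq_div_iff (GK_denom_pos hx hε).ne' h2]
  linear_combination Real.sq_sqrt hD

variable (x) in
lemma continuous_gkConj : Continuous fun ε => gkConj ε x := by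
  unfold gkConj
  fun_prop

lemma gkConj_zero : gkConj 0 x = (1 - x - |1 - x|) / (2 * (1 - x)) := by
  simp [gkConj, Real.sqrt_sq_eq_abs]

lemma eventually_GK_radicand_nonneg (hx1 : x ≠ 1) :
    ∀ᶠ ε in 𝓝 0, 0 ≤ (1 - x + ε * (1 + x)) ^ 2 - 4 * (1 - x) * x * ε := by
  have hcont : Continuous fun ε : ℝ => (1 - x + ε * (1 + x)) ^ 2 - 4 * (1 - x) * x * ε := by
    fun_prop
  have hpos : 0 < (1 - x + 0 * (1 + x)) ^ 2 - 4 * (1 - x) * x * 0 := by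
    simpa using sq_pos_of_ne_zero (sub_ne_zero.2 hx1.symm)
  filter_upwards [continuousAt_const.eventually_lt hcont.continuousAt hpos] with ε hε
  exact hε.le

lemma tendsto_GK_nhdsGT_zero (hx : 0 ≤ x) (hx1 : x ≠ 1) :
    Tendsto (fun ε => GK ε x) (𝓝[>] 0) (𝓝 ((1 - x - |1 - x|) / (2 * (1 - x)))) := by
  rw [← gkConj_zero]
  refine ((continuous_gkConj x).continuousWithinAt (s := Set.Ioi 0)).tendsto.congr' ?_
  filter_upwards [self_mem_nhdsWithin, nhdsWithin_le_nhds (eventually_GK_radicand_nonneg hx1)]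
    with ε hε hD
  exact (GK_eq_gkConj hx hx1 hε hD).symm

end

/-- For `x ∈ [0,1)`, `G_ε(x) → 0` as `ε → 0⁺`; for `x > 1`, `G_ε(x) → 1` as `ε → 0⁺`. -/
theorem goldbeter_koshland_pointwise_limit :
    (∀ x : ℝ, 0 ≤ x → x < 1 →
      Tendsto (fun ε : ℝ => GK ε x) (nhdsWithin 0 (Set.Ioi 0)) (nhds 0)) ∧
    (∀ x : ℝ, 1 < x →
      Tendsto (fun ε : ℝ => GK ε x) (nhdsWithin 0 (Set.Ioi 0)) (nhds 1)) := by
  refine ⟨fun x hx0 hx1 => ?_, fun x hx1 => ?_⟩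
  · have hlim := tendsto_GK_nhdsGT_zero hx0 hx1.ne
    rwa [abs_of_pos (sub_pos.2 hx1), sub_self, zero_div] at hlim
  · have hlim := tendsto_GK_nhdsGT_zero (by linarith) hx1.ne'
    have h2 : 2 * (1 - x) ≠ 0 := by linarith
    rwa [abs_of_neg (sub_neg.2 hx1), sub_neg_eq_add, ← two_mul, div_self h2] at hlim
end

section
/- Let α ∈ (0,1), β > 0, φ₀ > 0, k ∈ ℕ with k ≥ 1, and c ∈ ℝ. Consider the planar system ẏ = F(y,δ) + δ^k c + (1 − F(y,δ)) y, δ̇ = (1/k) δ (1 − F(y,δ)), where F(y,δ) = −αy − (β/α) φ₀ δ^{k(k+1)}. Then the lines δ = 0 is invariant; (y,δ) = (0,0) is an equilibrium whose Jacobian has eigenvalues 1−α > 0 and 1/k > 0, hence a hyperbolic unstable node; and (y,δ) = (−(1−α)/α, 0) is an equilibrium whose Jacobian has eigenvalues −(1−α) < 0 and α/k > 0, hence a hyperbolic saddle whose stable eigendirection is tangent to the invariant axis δ = 0. -/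
/-!
On the axis `δ = 0` the field reduces to `(y (1 - α + α y), 0)`, which gives the invariance of the
axis and the two equilibria. Since the `δ`-component vanishes identically on the axis, the Jacobian
at any point `(y₀, 0)` is upper triangular, with diagonal `1 - α + 2 α y₀` and `(1 + α y₀) / k`
(the `δ^{k(k+1)}` term has vanishing derivative there), and the spectrum of an upper triangular
operator is its diagonal.
-/

open ContinuousLinearMap

section UpperTriangular

variable {𝕜 : Type*} [NontriviallyNormedField 𝕜]

def upperTriangularCLM (a b d : 𝕜) : 𝕜 × 𝕜 →L[𝕜] 𝕜 × 𝕜 :=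
  (a • fst 𝕜 𝕜 𝕜 + b • snd 𝕜 𝕜 𝕜).prod (d • snd 𝕜 𝕜 𝕜)

@[simp]
lemma upperTriangularCLM_apply (a b d : 𝕜) (p : 𝕜 × 𝕜) :
    upperTriangularCLM a b d p = (a * p.1 + b * p.2, d * p.2) := by
  simp [upperTriangularCLM]

lemma det_upperTriangularCLM (a b d : 𝕜) :
    LinearMap.det (upperTriangularCLM a b d : 𝕜 × 𝕜 →ₗ[𝕜] 𝕜 × 𝕜) = a * d := by
  rw [← LinearMap.det_toMatrix (Module.Basis.finTwoProd 𝕜), Matrix.det_fin_two]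
  simp [LinearMap.toMatrix_apply]

lemma algebraMap_sub_upperTriangularCLM (μ a b d : 𝕜) :
    algebraMap 𝕜 (𝕜 × 𝕜 →L[𝕜] 𝕜 × 𝕜) μ - upperTriangularCLM a b d =
      upperTriangularCLM (μ - a) (-b) (μ - d) := by
  ext <;> simp [Algebra.algebraMap_eq_smul_one]

theorem spectrum_upperTriangularCLM [CompleteSpace 𝕜] (a b d : 𝕜) :
    spectrum 𝕜 (upperTriangularCLM a b d) = {a, d} := by
  ext μ
  rw [spectrum.mem_iff, algebraMap_sub_upperTriangularCLM, isUnit_iff_isUnit_toLinearMap,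
    LinearMap.isUnit_iff_isUnit_det, det_upperTriangularCLM, isUnit_iff_ne_zero, not_not,
    mul_eq_zero, sub_eq_zero, sub_eq_zero]
  rfl

end UpperTriangular

noncomputable def sphereSLField (α β φ₀ c : ℝ) (k : ℕ) (p : ℝ × ℝ) : ℝ × ℝ :=
  let F := -α * p.1 - β / α * φ₀ * p.2 ^ (k * (k + 1))
  (F + p.2 ^ k * c + (1 - F) * p.1, (1 / (k : ℝ)) * p.2 * (1 - F))

section SphereSLField

variable (α β φ₀ c : ℝ) {k : ℕ}

lemma sphereSLField_axis (hk : 1 ≤ k) (y : ℝ) :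
    sphereSLField α β φ₀ c k (y, 0) = (y * (1 - α + α * y), 0) := by
  have hk0 : k ≠ 0 := by omega
  simp [sphereSLField, hk0]
  ring

-- The off-diagonal entry `k * 0 ^ (k - 1) * c` is `c` for `k = 1` and `0` otherwise (`0 ^ 0 = 1`).
lemma hasFDerivAt_sphereSLField_axis (hk : 1 ≤ k) (y₀ : ℝ) :
    HasFDerivAt (sphereSLField α β φ₀ c k)
      (upperTriangularCLM (1 - α + 2 * α * y₀) (k * 0 ^ (k - 1) * c) ((1 + α * y₀) / k))
      (y₀, 0) := by
  have hy := hasFDerivAt_fst (𝕜 := ℝ) (p := ((y₀, 0) : ℝ × ℝ)) (F := ℝ)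
  have hδ := hasFDerivAt_snd (𝕜 := ℝ) (p := ((y₀, 0) : ℝ × ℝ)) (E := ℝ)
  have hpow (n : ℕ) := (hasDerivAt_pow n (0 : ℝ)).comp_hasFDerivAt (y₀, 0) hδ
  have hF := (hy.const_mul (-α)).sub ((hpow (k * (k + 1))).const_mul (β / α * φ₀))
  have h1F := hF.const_sub 1
  have hV := (((hF.add ((hpow k).mul_const c)).add (h1F.mul hy)).prodMk
    ((hδ.const_mul (1 / (k : ℝ))).mul h1F))
  refine hV.congr_fderiv ?_
  have hk0 : k ≠ 0 := by omega
  have hm : k * (k + 1) - 1 ≠ 0 := by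
    have : 1 * 2 ≤ k * (k + 1) := Nat.mul_le_mul hk (by omega)
    omega
  ext <;> simp [hm, hk0] <;> ring

end SphereSLField

theorem sphere_SL_chart_rbar1_nodes_general
    (α β φ₀ c : ℝ) (k : ℕ)
    (hα : 0 < α) (hα1 : α < 1) (hk : 1 ≤ k) :
    let F : ℝ → ℝ → ℝ := fun y δ => -α * y - β / α * φ₀ * δ ^ (k * (k + 1))
    let V : ℝ × ℝ → ℝ × ℝ := fun p =>
      (F p.1 p.2 + p.2 ^ k * c + (1 - F p.1 p.2) * p.1,
       (1 / (k : ℝ)) * p.2 * (1 - F p.1 p.2))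
    (∀ y : ℝ, (V (y, 0)).2 = 0) ∧
    (V (0, 0) = 0 ∧
      ∃ L : ℝ × ℝ →L[ℝ] ℝ × ℝ, HasFDerivAt V L (0, 0) ∧
        spectrum ℝ L = {1 - α, 1 / (k : ℝ)} ∧
        0 < 1 - α ∧ 0 < 1 / (k : ℝ)) ∧
    (V (-(1 - α) / α, 0) = 0 ∧
      ∃ L : ℝ × ℝ →L[ℝ] ℝ × ℝ, HasFDerivAt V L (-(1 - α) / α, 0) ∧
        spectrum ℝ L = {-(1 - α), α / (k : ℝ)} ∧
        -(1 - α) < 0 ∧ 0 < α / (k : ℝ) ∧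
        L (1, 0) = (-(1 - α)) • ((1 : ℝ), (0 : ℝ))) := by
  intro F V
  rw [show V = sphereSLField α β φ₀ c k from rfl]
  have hAxis := sphereSLField_axis α β φ₀ c hk
  have hDnode := hasFDerivAt_sphereSLField_axis α β φ₀ c hk 0
  have hDsaddle := hasFDerivAt_sphereSLField_axis α β φ₀ c hk (-(1 - α) / α)
  have hα0 : α ≠ 0 := hα.ne'
  have hsaddle_y : 1 - α + 2 * α * (-(1 - α) / α) = -(1 - α) := by field_simp; ring
  have hsaddle_δ : (1 + α * (-(1 - α) / α)) / k = α / k := by field_simp; ring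
  simp only [mul_zero, add_zero, hsaddle_y, hsaddle_δ] at hDnode hDsaddle
  refine ⟨fun y => by rw [hAxis], ⟨by simp [hAxis], _, hDnode, ?_, by linarith, by positivity⟩,
    ⟨?_, _, hDsaddle, spectrum_upperTriangularCLM .., by linarith, by positivity, by simp⟩⟩
  · rw [spectrum_upperTriangularCLM, one_div]
  · rw [hAxis, Prod.mk_eq_zero]
    exact ⟨by field_simp; ring, rfl⟩

/-- The `ρ₁ = 0` subsystem on the blow-up sphere `S^L` in chart `r̄ = 1`:
`ẏ = F + δ^k c + (1 − F)y`, `δ̇ = (1/k)δ(1 − F)` with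
`F(y,δ) = −αy − (β/α)φ₀δ^{k(k+1)}`. The line `δ = 0` is invariant; `(0,0)` is a
hyperbolic unstable node (eigenvalues `1−α > 0` and `1/k > 0`); and
`(−(1−α)/α, 0)` is a hyperbolic saddle (eigenvalues `−(1−α) < 0` and `α/k > 0`)
whose stable eigendirection `(1,0)` is tangent to the invariant axis `δ = 0`. -/
theorem sphere_SL_chart_rbar1_nodes
    (α β φ₀ c : ℝ) (k : ℕ)
    (hα : 0 < α) (hα1 : α < 1) (hβ : 0 < β) (hφ₀ : 0 < φ₀) (hk : 1 ≤ k) :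
    let F : ℝ → ℝ → ℝ := fun y δ => -α * y - β / α * φ₀ * δ ^ (k * (k + 1))
    let V : ℝ × ℝ → ℝ × ℝ := fun p =>
      (F p.1 p.2 + p.2 ^ k * c + (1 - F p.1 p.2) * p.1,
       (1 / (k : ℝ)) * p.2 * (1 - F p.1 p.2))
    (∀ y : ℝ, (V (y, 0)).2 = 0) ∧
    (V (0, 0) = 0 ∧
      ∃ L : ℝ × ℝ →L[ℝ] ℝ × ℝ, HasFDerivAt V L (0, 0) ∧
        spectrum ℝ L = {1 - α, 1 / (k : ℝ)} ∧
        0 < 1 - α ∧ 0 < 1 / (k : ℝ)) ∧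
    (V (-(1 - α) / α, 0) = 0 ∧
      ∃ L : ℝ × ℝ →L[ℝ] ℝ × ℝ, HasFDerivAt V L (-(1 - α) / α, 0) ∧
        spectrum ℝ L = {-(1 - α), α / (k : ℝ)} ∧
        -(1 - α) < 0 ∧ 0 < α / (k : ℝ) ∧
        L (1, 0) = (-(1 - α)) • ((1 : ℝ), (0 : ℝ))) :=
  sphere_SL_chart_rbar1_nodes_general α β φ₀ c k hα hα1 hk
end

section
/- Let α ∈ (0,1), β > 0, φ₀ > 0, k ∈ ℕ with k ≥ 1, and s > 0. Consider the planar system ẏ = F(y,δ) − δ^k s + (1 − F(y,δ)) y, δ̇ = (1/k) δ (1 − F(y,δ)), with F(y,δ) = −αy − (β/α) φ₀ δ^{k(k+1)}. Then the point z = (y,δ) = (−1/α − (β/α²) φ₀ s^{−(k+1)}, s^{−1/k}) is an equilibrium; the Jacobian at z has determinant α and trace α⁻¹ (k β φ₀ s^{−(k+1)} − α(1+α)). Consequently the trace vanishes if and only if s = (k β φ₀ / (α(α+1)))^{1/(k+1)}; for s larger than this value the equilibrium is hyperbolic with both eigenvalues of negative real part (attracting), and for smaller positive s it is hyperbolic with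 both eigenvalues of positive real part (repelling). -/
/-!
With `δ = s^(-1/k)` we get `δ^k = s⁻¹` and `δ^(k(k+1)) = s^(-(k+1))`, which makes `F = 1` at `z`,
so both components of the field vanish there. Where `F = 1` the Jacobian loses every term
carrying the factor `1 - F`, its determinant collapses to `α s δ^k = α`, and its trace factors
as `(1 + α) s^(-(k+1)) (s_H^(k+1) - s^(k+1))`. An eigenvalue `μ` of a real `2 × 2` matrix solves
`μ² - T μ + d = 0`; if `d > 0`, either `μ` is real and `T μ = μ² + d > 0`, or `μ.re = T / 2`.
Either way `μ.re` has the sign of the trace `T`.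
-/

open Matrix

theorem Matrix.sq_sub_trace_mul_add_det_eq_zero_of_mem_spectrum {K : Type*} [Field K]
    (M : Matrix (Fin 2) (Fin 2) K) {μ : K} (hμ : μ ∈ spectrum K M) :
    μ ^ 2 - M.trace * μ + M.det = 0 := by
  simpa [M.charpoly_fin_two] using Matrix.mem_spectrum_iff_isRoot_charpoly.mp hμ

theorem Complex.mul_re_pos_of_sq_sub_mul_add_eq_zero {T d : ℝ} (hT : T ≠ 0) (hd : 0 < d)
    {μ : ℂ} (h : μ ^ 2 - T * μ + d = 0) : 0 < T * μ.re := by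
  have hre := congrArg Complex.re h
  have him := congrArg Complex.im h
  simp only [pow_two, Complex.add_re, Complex.sub_re, Complex.mul_re, Complex.ofReal_re,
    Complex.ofReal_im, Complex.add_im, Complex.sub_im, Complex.mul_im, Complex.zero_re,
    Complex.zero_im] at hre him
  rcases mul_eq_zero.mp (show μ.im * (2 * μ.re - T) = 0 by linear_combination him) with
    hreal | hcomplex
  · rw [hreal] at hre
    nlinarith [sq_nonneg μ.re]
  · have hT2 : 0 < T ^ 2 := by positivity
    nlinarith

theorem Matrix.trace_mul_re_pos_of_mem_spectrum {M : Matrix (Fin 2) (Fin 2) ℝ}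
    (htr : M.trace ≠ 0) (hdet : 0 < M.det)
    {μ : ℂ} (hμ : μ ∈ spectrum ℂ (M.map (Complex.ofReal ·))) : 0 < M.trace * μ.re := by
  have hchar := (M.map (Complex.ofReal ·)).sq_sub_trace_mul_add_det_eq_zero_of_mem_spectrum hμ
  exact Complex.mul_re_pos_of_sq_sub_mul_add_eq_zero htr hdet
    (by simpa [trace_fin_two, det_fin_two] using hchar)

theorem Real.rpow_one_div_natCast_add_one_pow {x : ℝ} (hx : 0 ≤ x) (n : ℕ) :
    (x ^ (1 / ((n : ℝ) + 1))) ^ (n + 1) = x := by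
  rw [one_div, ← Nat.cast_add_one, Real.rpow_inv_natCast_pow hx n.succ_ne_zero]

theorem Real.rpow_neg_one_div_natCast_pow {s : ℝ} (hs : 0 ≤ s) {k : ℕ} (hk : k ≠ 0) :
    (s ^ (-(1 : ℝ) / k)) ^ k = s⁻¹ := by
  rw [neg_div, one_div, Real.rpow_neg hs, inv_pow, Real.rpow_inv_natCast_pow hs hk]

noncomputable section

variable (α β φ₀ s : ℝ) (k : ℕ)

def chartF (y δ : ℝ) : ℝ := -α * y - β / α * φ₀ * δ ^ (k * (k + 1))

def chartField (p : Fin 2 → ℝ) : Fin 2 → ℝ :=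
  ![chartF α β φ₀ k (p 0) (p 1) - p 1 ^ k * s + (1 - chartF α β φ₀ k (p 0) (p 1)) * p 0,
    1 / (k : ℝ) * p 1 * (1 - chartF α β φ₀ k (p 0) (p 1))]

def chartEquilibrium : Fin 2 → ℝ :=
  ![-(1 / α) - β / α ^ 2 * φ₀ * (s ^ (k + 1))⁻¹, s ^ (-(1 : ℝ) / k)]

/-- The Jacobian of `chartField` at points where `chartF = 1`. -/
def chartJacobian (y δ : ℝ) : Matrix (Fin 2) (Fin 2) ℝ :=
  !![α * (y - 1),
      β / α * φ₀ * (k * (k + 1)) * δ ^ (k * (k + 1) - 1) * (y - 1) - k * δ ^ (k - 1) * s;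
    α * δ / k, β / α * φ₀ * (k + 1) * δ ^ (k * (k + 1) - 1) * δ]

theorem hasFDerivAt_chartF (p : Fin 2 → ℝ) :
    HasFDerivAt (fun q : Fin 2 → ℝ => chartF α β φ₀ k (q 0) (q 1))
      ((-α) • (ContinuousLinearMap.proj 0 : (Fin 2 → ℝ) →L[ℝ] ℝ) -
        (β / α * φ₀ * (k * (k + 1)) * p 1 ^ (k * (k + 1) - 1)) •
          (ContinuousLinearMap.proj 1 : (Fin 2 → ℝ) →L[ℝ] ℝ)) p := by
  have hpow := (hasDerivAt_pow (k * (k + 1)) (p 1)).comp_hasFDerivAt p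
    (hasFDerivAt_apply (𝕜 := ℝ) 1 p)
  refine (((hasFDerivAt_apply 0 p).const_mul (-α)).sub
    (hpow.const_mul (β / α * φ₀))).congr_fderiv ?_
  ext q
  simp only [neg_smul, Nat.cast_mul, Nat.cast_add, Nat.cast_one, _root_.sub_apply,
    _root_.neg_apply, _root_.smul_apply, ContinuousLinearMap.proj_apply, smul_eq_mul]
  ring

theorem hasFDerivAt_chartField (hk : k ≠ 0) {p : Fin 2 → ℝ}
    (hp : chartF α β φ₀ k (p 0) (p 1) = 1) :
    HasFDerivAt (chartField α β φ₀ s k)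
      (Matrix.mulVecLin (chartJacobian α β φ₀ s k (p 0) (p 1))).toContinuousLinearMap p := by
  have hF := hasFDerivAt_chartF α β φ₀ k p
  have hpow := (hasDerivAt_pow k (p 1)).comp_hasFDerivAt p (hasFDerivAt_apply (𝕜 := ℝ) 1 p)
  rw [hasFDerivAt_pi']
  intro i
  fin_cases i
  · refine ((hF.sub (hpow.mul_const s)).add
      ((hF.const_sub 1).mul (hasFDerivAt_apply 0 p))).congr_fderiv ?_
    ext q
    simp only [hp, sub_self, zero_smul, neg_sub, zero_add, _root_.add_apply, _root_.sub_apply,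
      _root_.smul_apply, ContinuousLinearMap.proj_apply, smul_eq_mul, neg_mul, sub_neg_eq_add,
      Fin.zero_eta, chartJacobian, ContinuousLinearMap.comp_apply,
      LinearMap.coe_toContinuousLinearMap', mulVecBilin_apply, cons_mulVec, dotProduct,
      Fin.sum_univ_two, cons_val_zero, cons_val_one, cons_val_fin_one, empty_mulVec]
    ring
  · refine (((hasFDerivAt_apply 1 p).const_mul (1 / (k : ℝ))).mul
      (hF.const_sub 1)).congr_fderiv ?_
    ext q
    simp only [one_div, neg_sub, hp, sub_self, zero_smul, add_zero, _root_.smul_apply,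
      _root_.sub_apply, ContinuousLinearMap.proj_apply, smul_eq_mul, neg_mul, sub_neg_eq_add,
      Fin.mk_one, chartJacobian, ContinuousLinearMap.comp_apply,
      LinearMap.coe_toContinuousLinearMap', mulVecBilin_apply, cons_mulVec, dotProduct,
      Fin.sum_univ_two, cons_val_zero, cons_val_one, cons_val_fin_one, empty_mulVec]
    field_simp
    ring

variable {α β φ₀ s k}

theorem chartEquilibrium_one_pow (hs : 0 ≤ s) (hk : k ≠ 0) :
    chartEquilibrium α β φ₀ s k 1 ^ k = s⁻¹ :=
  Real.rpow_neg_one_div_natCast_pow hs hk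

theorem chartEquilibrium_one_pow_mul_succ (hs : 0 ≤ s) (hk : k ≠ 0) :
    chartEquilibrium α β φ₀ s k 1 ^ (k * (k + 1)) = (s ^ (k + 1))⁻¹ := by
  rw [pow_mul, chartEquilibrium_one_pow hs hk, inv_pow]

theorem chartF_chartEquilibrium (hα : α ≠ 0) (hs : 0 < s) (hk : k ≠ 0) :
    chartF α β φ₀ k (chartEquilibrium α β φ₀ s k 0) (chartEquilibrium α β φ₀ s k 1) = 1 := by
  rw [chartF, chartEquilibrium_one_pow_mul_succ hs.le hk]
  simp only [chartEquilibrium, Matrix.cons_val_zero]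
  field_simp
  ring

theorem chartField_chartEquilibrium (hα : α ≠ 0) (hs : 0 < s) (hk : k ≠ 0) :
    chartField α β φ₀ s k (chartEquilibrium α β φ₀ s k) = 0 := by
  have hF := chartF_chartEquilibrium (β := β) (φ₀ := φ₀) hα hs hk
  ext i
  fin_cases i
  · simp [chartField, hF, chartEquilibrium_one_pow hs.le hk, hs.ne']
  · simp [chartField, hF]

theorem det_chartJacobian_chartEquilibrium (hs : 0 < s) (hk : k ≠ 0) :
    (chartJacobian α β φ₀ s k (chartEquilibrium α β φ₀ s k 0)
      (chartEquilibrium α β φ₀ s k 1)).det = α := by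
  set δ := chartEquilibrium α β φ₀ s k 1
  have hδ : δ * δ ^ (k - 1) = s⁻¹ := by
    rw [← pow_succ', Nat.sub_add_cancel (Nat.one_le_iff_ne_zero.2 hk),
      chartEquilibrium_one_pow hs.le hk]
  calc _ = α * s * (δ * δ ^ (k - 1)) := by
        rw [chartJacobian, Matrix.det_fin_two_of]
        generalize β / α * φ₀ = c
        field_simp
        ring
    _ = α := by rw [hδ, mul_assoc, mul_inv_cancel₀ hs.ne', mul_one]

theorem trace_chartJacobian_chartEquilibrium (hα : α ≠ 0) (hs : 0 < s) (hk : k ≠ 0) :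
    (chartJacobian α β φ₀ s k (chartEquilibrium α β φ₀ s k 0)
      (chartEquilibrium α β φ₀ s k 1)).trace =
      α⁻¹ * (k * β * φ₀ * (s ^ (k + 1))⁻¹ - α * (1 + α)) := by
  set δ := chartEquilibrium α β φ₀ s k 1
  have hδ : δ ^ (k * (k + 1) - 1) * δ = (s ^ (k + 1))⁻¹ := by
    rw [← pow_succ, Nat.sub_add_cancel (Nat.one_le_iff_ne_zero.2 (by positivity)),
      chartEquilibrium_one_pow_mul_succ hs.le hk]
  rw [chartJacobian, Matrix.trace_fin_two_of, mul_assoc _ (δ ^ _), hδ]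
  simp only [chartEquilibrium, Matrix.cons_val_zero]
  field_simp
  ring

end

theorem sphere_SL_hopf_bifurcation_general
    (α β φ₀ s : ℝ) (k : ℕ)
    (hα : 0 < α) (hβ : 0 < β) (hφ₀ : 0 < φ₀) (hk : 1 ≤ k) (hs : 0 < s) :
    let F : ℝ → ℝ → ℝ := fun y δ => -α * y - β / α * φ₀ * δ ^ (k * (k + 1))
    let V : (Fin 2 → ℝ) → (Fin 2 → ℝ) := fun p =>
      ![F (p 0) (p 1) - (p 1) ^ k * s + (1 - F (p 0) (p 1)) * p 0,
        (1 / (k : ℝ)) * p 1 * (1 - F (p 0) (p 1))]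
    let z : Fin 2 → ℝ :=
      ![-(1 / α) - β / α ^ 2 * φ₀ * (s ^ (k + 1))⁻¹, s ^ (-(1 : ℝ) / (k : ℝ))]
    let sH : ℝ := (k * β * φ₀ / (α * (α + 1))) ^ ((1 : ℝ) / ((k : ℝ) + 1))
    V z = 0 ∧
    ∃ J : Matrix (Fin 2) (Fin 2) ℝ,
      HasFDerivAt V (LinearMap.toContinuousLinearMap (Matrix.mulVecLin J)) z ∧
      J.det = α ∧
      J.trace = α⁻¹ * ((k : ℝ) * β * φ₀ * (s ^ (k + 1))⁻¹ - α * (1 + α)) ∧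
      (J.trace = 0 ↔ s = sH) ∧
      (sH < s → ∀ μ ∈ spectrum ℂ (J.map (Complex.ofReal ·)), μ.re < 0) ∧
      (s < sH → ∀ μ ∈ spectrum ℂ (J.map (Complex.ofReal ·)), 0 < μ.re) := by
  intro F V z sH
  have hk0 : k ≠ 0 := by omega
  have hX : 0 ≤ k * β * φ₀ / (α * (α + 1)) := by positivity
  have hsH : 0 ≤ sH := Real.rpow_nonneg hX _
  set J := chartJacobian α β φ₀ s k (z 0) (z 1)
  have hdet : J.det = α := det_chartJacobian_chartEquilibrium hs hk0
  have htrace : J.trace = α⁻¹ * (k * β * φ₀ * (s ^ (k + 1))⁻¹ - α * (1 + α)) :=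
    trace_chartJacobian_chartEquilibrium hα.ne' hs hk0
  have hc : 0 < (1 + α) * (s ^ (k + 1))⁻¹ := by positivity
  have hsign : J.trace = (1 + α) * (s ^ (k + 1))⁻¹ * (sH ^ (k + 1) - s ^ (k + 1)) := by
    rw [htrace, show sH ^ (k + 1) = _ from Real.rpow_one_div_natCast_add_one_pow hX k]
    field_simp
    ring
  refine ⟨chartField_chartEquilibrium hα.ne' hs hk0, J,
    hasFDerivAt_chartField α β φ₀ s k hk0 (chartF_chartEquilibrium hα.ne' hs hk0), hdet, htrace,
    ?_, fun hlt μ hμ => ?_, fun hlt μ hμ => ?_⟩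
  · rw [hsign, mul_eq_zero, or_iff_right hc.ne', sub_eq_zero,
      pow_left_inj₀ hsH hs.le k.succ_ne_zero, eq_comm]
  · have hneg : J.trace < 0 := hsign ▸
      mul_neg_of_pos_of_neg hc (sub_neg.2 (pow_lt_pow_left₀ hlt hsH k.succ_ne_zero))
    exact neg_of_mul_pos_right
      (J.trace_mul_re_pos_of_mem_spectrum hneg.ne (hdet ▸ hα) hμ) hneg.le
  · have hpos : 0 < J.trace := hsign ▸
      mul_pos hc (sub_pos.2 (pow_lt_pow_left₀ hlt hs.le k.succ_ne_zero))
    exact pos_of_mul_pos_right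
      (J.trace_mul_re_pos_of_mem_spectrum hpos.ne' (hdet ▸ hα) hμ) hpos.le

/-- Hopf bifurcation of the interior equilibrium on the sphere `S^L` (chart `r̄ = 1`,
`ρ₁ = 0` subsystem, written with `s = η^L(μ) − η > 0`):
`z = (−1/α − (β/α²)φ₀ s^{−(k+1)}, s^{−1/k})` is an equilibrium, the Jacobian there has
determinant `α` and trace `α⁻¹(kβφ₀ s^{−(k+1)} − α(1+α))`; the trace vanishes iff
`s = (kβφ₀/(α(α+1)))^{1/(k+1)}`, for larger `s` the equilibrium is hyperbolic attracting
(all eigenvalues of negative real part), for smaller positive `s` hyperbolic repelling. -/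
theorem sphere_SL_hopf_bifurcation
    (α β φ₀ s : ℝ) (k : ℕ)
    (hα : 0 < α) (hα1 : α < 1) (hβ : 0 < β) (hφ₀ : 0 < φ₀) (hk : 1 ≤ k) (hs : 0 < s) :
    let F : ℝ → ℝ → ℝ := fun y δ => -α * y - β / α * φ₀ * δ ^ (k * (k + 1))
    let V : (Fin 2 → ℝ) → (Fin 2 → ℝ) := fun p =>
      ![F (p 0) (p 1) - (p 1) ^ k * s + (1 - F (p 0) (p 1)) * p 0,
        (1 / (k : ℝ)) * p 1 * (1 - F (p 0) (p 1))]
    let z : Fin 2 → ℝ :=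
      ![-(1 / α) - β / α ^ 2 * φ₀ * (s ^ (k + 1))⁻¹, s ^ (-(1 : ℝ) / (k : ℝ))]
    let sH : ℝ := (k * β * φ₀ / (α * (α + 1))) ^ ((1 : ℝ) / ((k : ℝ) + 1))
    V z = 0 ∧
    ∃ J : Matrix (Fin 2) (Fin 2) ℝ,
      HasFDerivAt V (LinearMap.toContinuousLinearMap (Matrix.mulVecLin J)) z ∧
      J.det = α ∧
      J.trace = α⁻¹ * ((k : ℝ) * β * φ₀ * (s ^ (k + 1))⁻¹ - α * (1 + α)) ∧
      (J.trace = 0 ↔ s = sH) ∧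
      (sH < s → ∀ μ ∈ spectrum ℂ (J.map (Complex.ofReal ·)), μ.re < 0) ∧
      (s < sH → ∀ μ ∈ spectrum ℂ (J.map (Complex.ofReal ·)), 0 < μ.re) :=
  sphere_SL_hopf_bifurcation_general α β φ₀ s k hα hβ hφ₀ hk hs
end

section
/- Let α ∈ (0,1) and set B = −(1−α)/α, so −1/α < B < 0. Define g(y) = y(1 + αy)(αy + 1 − α) and F(y) = −(α/2)(αy + 1)(α(3y − 2) + 1). Then: (i) g(y)·(y + 1/α) > 0 for every y ∈ (−∞, −1/α) ∪ (−1/α, B); (ii) F(−1/α) = 0; (iii) F(y) < 0 for every y < −1/α; (iv) F(y) > 0 for every y ∈ (−1/α, B). -/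
/-! With `u = αy + 1`, one has `y + 1/α = u/α`, so `g(y)(y + 1/α) = y(u − α)u²/α`; for `y < B < 0`
both `y` and `u − α = αy + 1 − α` are negative, hence this is positive away from `u = 0`.
Likewise `F(y) = −(α/2)·u·(α(3y − 2) + 1)` where the last factor is negative for `y < B`,
so `F` has the sign of `u`, which changes exactly at `y = −1/α`. -/

section
variable {α y : ℝ}

theorem neg_one_div_lt_neg_one_sub_div (hα : 0 < α) : -(1 / α) < -(1 - α) / α := by
  rw [neg_div, neg_lt_neg_iff]
  exact div_lt_div_of_pos_right (by linarith) hα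

theorem neg_one_sub_div_neg (hα : 0 < α) (hα1 : α < 1) : -(1 - α) / α < 0 :=
  div_neg_of_neg_of_pos (by linarith) hα

theorem mul_add_one_neg_iff (hα : 0 < α) : α * y + 1 < 0 ↔ y < -(1 / α) := by
  rw [neg_div', lt_div_iff₀ hα]
  constructor <;> intro h <;> linarith

theorem mul_add_one_pos_iff (hα : 0 < α) : 0 < α * y + 1 ↔ -(1 / α) < y := by
  rw [neg_div', div_lt_iff₀ hα]
  constructor <;> intro h <;> linarith

theorem mul_add_one_sub_neg_iff (hα : 0 < α) : α * y + 1 - α < 0 ↔ y < -(1 - α) / α := by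
  rw [lt_div_iff₀ hα]
  constructor <;> intro h <;> linarith

theorem mul_three_mul_sub_two_add_one_neg (hα : 0 < α) (hα1 : α < 1) (hy : y < -(1 - α) / α) :
    α * (3 * y - 2) + 1 < 0 := by
  have := (mul_add_one_sub_neg_iff hα).2 hy
  linarith

theorem lienard_g_mul_eq_sq_div (hα : α ≠ 0) :
    y * (1 + α * y) * (α * y + 1 - α) * (y + 1 / α) =
      y * (α * y + 1 - α) * (α * y + 1) ^ 2 / α := by
  field_simp
  ring

end

/-- The sign conditions of Cherkas' theorem for the Liénard system arising on the
blow-up sphere `S^L`: with `B = −(1−α)/α ∈ (−1/α, 0)`, `g(y) = y(1+αy)(αy+1−α)` and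
`F(y) = −(α/2)(αy+1)(α(3y−2)+1)`, one has `g(y)(y+1/α) > 0` on
`(−∞,−1/α) ∪ (−1/α,B)`, `F(−1/α) = 0`, `F < 0` on `(−∞,−1/α)` and `F > 0` on
`(−1/α, B)`. -/
theorem cherkas_sign_conditions (α : ℝ) (hα : 0 < α) (hα1 : α < 1) :
    (-(1 / α) < -(1 - α) / α ∧ -(1 - α) / α < 0) ∧
    (∀ y : ℝ, (y < -(1 / α) ∨ (-(1 / α) < y ∧ y < -(1 - α) / α)) →
      0 < y * (1 + α * y) * (α * y + 1 - α) * (y + 1 / α)) ∧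
    (-(α / 2) * (α * (-(1 / α)) + 1) * (α * (3 * (-(1 / α)) - 2) + 1) = 0) ∧
    (∀ y : ℝ, y < -(1 / α) →
      -(α / 2) * (α * y + 1) * (α * (3 * y - 2) + 1) < 0) ∧
    (∀ y : ℝ, -(1 / α) < y → y < -(1 - α) / α →
      0 < -(α / 2) * (α * y + 1) * (α * (3 * y - 2) + 1)) := by
  have hB := neg_one_div_lt_neg_one_sub_div hα
  have hB0 := neg_one_sub_div_neg hα hα1
  refine ⟨⟨hB, hB0⟩, fun y hy => ?_, by field_simp; ring, fun y hy => ?_, fun y hy hyB => ?_⟩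
  · have hyB : y < -(1 - α) / α := hy.elim (·.trans hB) (·.2)
    have hu : α * y + 1 ≠ 0 := by
      rcases hy with hy | ⟨hy, -⟩
      · exact ((mul_add_one_neg_iff hα).2 hy).ne
      · exact ((mul_add_one_pos_iff hα).2 hy).ne'
    rw [lienard_g_mul_eq_sq_div hα.ne']
    have hyu : 0 < y * (α * y + 1 - α) :=
      mul_pos_of_neg_of_neg (hyB.trans hB0) ((mul_add_one_sub_neg_iff hα).2 hyB)
    positivity
  · have hu := (mul_add_one_neg_iff hα).2 hy
    have hF := mul_three_mul_sub_two_add_one_neg hα hα1 (hy.trans hB)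
    rw [mul_assoc]
    exact mul_neg_of_neg_of_pos (by linarith) (mul_pos_of_neg_of_neg hu hF)
  · have hu := (mul_add_one_pos_iff hα).2 hy
    have hF := mul_three_mul_sub_two_add_one_neg hα hα1 hyB
    rw [mul_assoc]
    exact mul_pos_of_neg_of_neg (by linarith) (mul_neg_of_pos_of_neg hu hF)
end

section
/- Let k ∈ ℕ with k ≥ 1, α ∈ (0,1), β > 0, φ₀ > 0 and s > 0, and set δ₀ = (α²/(βφ₀))^{1/(k(k+1))}. For each δ ∈ [0, δ₀] there exists a unique r = N(δ) ≥ 0 satisfying r^{k+1}(1 − α + (β/α)φ₀ δ^{k(k+1)} + r^k δ^k s) = α − (β/α)φ₀ δ^{k(k+1)}; moreover N(δ) > 0 for δ ∈ [0, δ₀), N(δ₀) = 0, and N is strictly decreasing on [0, δ₀]. -/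
/-!
With `c = (β/α) φ₀`, for fixed `δ ≥ 0` the left-hand side `G δ r` is continuous and strictly
increasing in `r ≥ 0`, vanishes at `r = 0` and tends to infinity, while the right-hand side
`F₄ δ` is strictly decreasing with its zero at `δ₀`. So the root `N δ` exists and is unique,
positive before `δ₀` and zero at `δ₀`. Since `G` is also increasing in `δ`, `N δ ≤ N δ'` for
`δ < δ'` would give `F₄ δ = G δ (N δ) ≤ G δ' (N δ) ≤ G δ' (N δ') = F₄ δ' < F₄ δ`.
-/

open Set Filter

theorem ContinuousOn.existsUnique_eq_of_strictMonoOn_Ici {α β : Type*}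
    [ConditionallyCompleteLinearOrder α] [TopologicalSpace α] [OrderTopology α]
    [DenselyOrdered α] [LinearOrder β] [TopologicalSpace β] [OrderClosedTopology β]
    {f : α → β} {a : α} {y : β} (hf : ContinuousOn f (Ici a)) (hmono : StrictMonoOn f (Ici a))
    (htop : Tendsto f atTop atTop) (hy : f a ≤ y) :
    ∃! r, a ≤ r ∧ f r = y := by
  obtain ⟨R, hR⟩ := ((htop.eventually_ge_atTop y).and (eventually_ge_atTop a)).exists
  obtain ⟨r, hr, hfr⟩ := intermediate_value_Icc hR.2 (hf.mono Icc_subset_Ici_self) ⟨hy, hR.1⟩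
  exact ⟨r, ⟨hr.1, hfr⟩, fun r' hr' => hmono.injOn hr'.1 hr.1 (hr'.2.trans hfr.symm)⟩

theorem StrictAntiOn.of_apply_eq_of_monotoneOn {α β γ : Type*} [Preorder α] [LinearOrder β]
    [Preorder γ] {S : Set α} {T : Set β} {G : α → β → γ} {F : α → γ} {N : α → β}
    (hF : StrictAntiOn F S) (hGleft : ∀ r ∈ T, MonotoneOn (G · r) S)
    (hGright : ∀ δ ∈ S, MonotoneOn (G δ) T) (hNT : ∀ δ ∈ S, N δ ∈ T)
    (hN : ∀ δ ∈ S, G δ (N δ) = F δ) : StrictAntiOn N S := by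
  intro a ha b hb hab
  by_contra! hle
  have : F a ≤ F b := calc
    F a = G a (N a) := (hN a ha).symm
    _ ≤ G b (N a) := hGleft _ (hNT a ha) ha hb hab.le
    _ ≤ G b (N b) := hGright b hb (hNT a ha) (hNT b hb) hle
    _ = F b := hN b hb
  exact (hF ha hb hab).not_ge this

namespace R4Nullcline

variable (k : ℕ) (α c s : ℝ)

def F₄ (δ : ℝ) : ℝ := α - c * δ ^ (k * (k + 1))

def G (δ r : ℝ) : ℝ := r ^ (k + 1) * (1 - α + c * δ ^ (k * (k + 1)) + r ^ k * δ ^ k * s)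

variable {k α c s}

theorem F₄_strictAntiOn (hk : 1 ≤ k) (hc : 0 < c) : StrictAntiOn (F₄ k α c) (Ici 0) := by
  intro a ha b _ hab
  have : a ^ (k * (k + 1)) < b ^ (k * (k + 1)) :=
    pow_lt_pow_left₀ hab ha (by positivity)
  unfold F₄
  nlinarith

theorem G_zero_right (δ : ℝ) : G k α c s δ 0 = 0 := by
  simp [G]

theorem continuous_G (δ : ℝ) : Continuous (G k α c s δ) := by
  unfold G
  fun_prop

theorem G_monotoneOn_left (hc : 0 ≤ c) (hs : 0 ≤ s) {r : ℝ} (hr : 0 ≤ r) :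
    MonotoneOn (G k α c s · r) (Ici 0) := by
  intro a ha b _ hab
  simp only [G]
  gcongr

theorem G_strictMonoOn_right (hα1 : α < 1) (hc : 0 ≤ c) (hs : 0 ≤ s) {δ : ℝ} (hδ : 0 ≤ δ) :
    StrictMonoOn (G k α c s δ) (Ici 0) := by
  intro a (ha : 0 ≤ a) b _ hab
  have hA : 0 < 1 - α + c * δ ^ (k * (k + 1)) := by
    have : 0 ≤ c * δ ^ (k * (k + 1)) := by positivity
    linarith
  refine mul_lt_mul (pow_lt_pow_left₀ hab ha (by omega)) ?_ (by positivity)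
    (pow_nonneg (ha.trans hab.le) _)
  gcongr

theorem G_tendsto_atTop (hα1 : α < 1) (hc : 0 ≤ c) (hs : 0 ≤ s) {δ : ℝ} (hδ : 0 ≤ δ) :
    Tendsto (G k α c s δ) atTop atTop := by
  set A := 1 - α + c * δ ^ (k * (k + 1))
  have hA : 0 < A := by
    have : 0 ≤ c * δ ^ (k * (k + 1)) := by positivity
    linarith
  refine tendsto_atTop_mono' _ ?_
    ((tendsto_pow_atTop (α := ℝ) (n := k + 1) (by omega)).atTop_mul_const hA)
  filter_upwards [eventually_ge_atTop (0 : ℝ)] with r hr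
  show r ^ (k + 1) * A ≤ r ^ (k + 1) * (A + r ^ k * δ ^ k * s)
  gcongr
  exact le_add_of_nonneg_right (by positivity)

theorem F₄_eq_zero (hk : 1 ≤ k) (hα : 0 < α) {β φ₀ : ℝ} (hβ : 0 < β) (hφ₀ : 0 < φ₀) :
    F₄ k α (β / α * φ₀) ((α ^ 2 / (β * φ₀)) ^ ((1 : ℝ) / ((k : ℝ) * ((k : ℝ) + 1)))) = 0 := by
  have hpow := Real.rpow_inv_natCast_pow (x := α ^ 2 / (β * φ₀)) (n := k * (k + 1))
    (by positivity) (by positivity)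
  push_cast at hpow
  rw [F₄, one_div, hpow]
  field_simp
  ring

end R4Nullcline

open R4Nullcline

/-- The nontrivial part of the `r₄`-nullcline is a strictly decreasing graph
`r = N(δ)` over `δ ∈ [0, δ₀]`, where `δ₀ = (α²/(βφ₀))^{1/(k(k+1))}`: for each
`δ ∈ [0,δ₀]` there is a unique `r ≥ 0` with
`r^{k+1}(1 − α + (β/α)φ₀ δ^{k(k+1)} + r^k δ^k s) = α − (β/α)φ₀ δ^{k(k+1)}`, and
`N > 0` on `[0,δ₀)`, `N(δ₀) = 0`, `N` strictly decreasing on `[0,δ₀]`. -/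
theorem r4_nullcline_graph (k : ℕ) (α β φ₀ s : ℝ)
    (hk : 1 ≤ k) (hα : 0 < α) (hα1 : α < 1) (hβ : 0 < β) (hφ₀ : 0 < φ₀) (hs : 0 < s) :
    let δ₀ : ℝ := (α ^ 2 / (β * φ₀)) ^ ((1 : ℝ) / ((k : ℝ) * ((k : ℝ) + 1)))
    (∀ δ ∈ Set.Icc (0 : ℝ) δ₀, ∃! r : ℝ, 0 ≤ r ∧
      r ^ (k + 1) * (1 - α + β / α * φ₀ * δ ^ (k * (k + 1)) + r ^ k * δ ^ k * s)
        = α - β / α * φ₀ * δ ^ (k * (k + 1))) ∧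
    ∃ N : ℝ → ℝ,
      (∀ δ ∈ Set.Icc (0 : ℝ) δ₀, 0 ≤ N δ ∧
        (N δ) ^ (k + 1) * (1 - α + β / α * φ₀ * δ ^ (k * (k + 1)) + (N δ) ^ k * δ ^ k * s)
          = α - β / α * φ₀ * δ ^ (k * (k + 1))) ∧
      (∀ δ ∈ Set.Ico (0 : ℝ) δ₀, 0 < N δ) ∧
      N δ₀ = 0 ∧
      StrictAntiOn N (Set.Icc 0 δ₀) := by
  intro δ₀
  set c := β / α * φ₀
  have hc : 0 < c := by positivity
  have hδ₀ : 0 < δ₀ := by positivity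
  have hFδ₀ : F₄ k α c δ₀ = 0 := F₄_eq_zero hk hα hβ hφ₀
  have hF : StrictAntiOn (F₄ k α c) (Ici 0) := F₄_strictAntiOn hk hc
  have hEU : ∀ δ ∈ Icc 0 δ₀, ∃! r, 0 ≤ r ∧ G k α c s δ r = F₄ k α c δ := fun δ hδ =>
    (continuous_G δ).continuousOn.existsUnique_eq_of_strictMonoOn_Ici
      (G_strictMonoOn_right hα1 hc.le hs.le hδ.1) (G_tendsto_atTop hα1 hc.le hs.le hδ.1)
      (by rw [G_zero_right, ← hFδ₀]; exact hF.antitoneOn hδ.1 hδ₀.le hδ.2)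
  refine ⟨hEU, ?_⟩
  choose! N hN using fun δ hδ => (hEU δ hδ).exists
  refine ⟨N, hN, fun δ hδ => ?_, ?_, ?_⟩
  · obtain ⟨hN0, hNeq⟩ := hN δ ⟨hδ.1, hδ.2.le⟩
    refine hN0.lt_of_ne fun h0 => (hF hδ.1 hδ₀.le hδ.2).ne' ?_
    rw [hFδ₀, ← hNeq, ← h0, G_zero_right]
  · have hδ₀mem : δ₀ ∈ Icc 0 δ₀ := ⟨hδ₀.le, le_rfl⟩
    exact (hEU δ₀ hδ₀mem).unique (hN δ₀ hδ₀mem) ⟨le_rfl, (G_zero_right _).trans hFδ₀.symm⟩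
  · exact StrictAntiOn.of_apply_eq_of_monotoneOn (hF.mono Icc_subset_Ici_self)
      (fun r hr => (G_monotoneOn_left hc.le hs.le hr).mono Icc_subset_Ici_self)
      (fun δ hδ => (G_strictMonoOn_right hα1 hc.le hs.le hδ.1).monotoneOn)
      (fun δ hδ => (hN δ hδ).1) (fun δ hδ => (hN δ hδ).2)
end

section
/- Let k ∈ ℕ with k ≥ 1, α ∈ (0,1), β > 0, φ₀ > 0, set F(δ) = α − (β/α)φ₀ δ^{k(k+1)} and δ₀ = (α²/(βφ₀))^{1/(k(k+1))}, and define R(δ) = δ^{k+1} F(δ) / (1 + F(δ)/k)^{(2k+1)/k} for δ ∈ (0, δ₀]. Then R(δ) > 0 for δ ∈ (0, δ₀), R(δ) → 0 as δ → 0⁺, R(δ₀) = 0, and there exists a unique δ₁ ∈ (0, δ₀) such that R is strictly increasing on (0, δ₁] and strictly decreasing on [δ₁, δ₀] (in particular R has at most one critical point in (0, δ₀)). -/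
/-!
Writing `F` for `F(δ)` and `p = (2k+1)/k`, a direct computation using `δ F' = -k(k+1)(α - F)` gives
`R'(δ) = (k+1) δ^k Q(F) / (1 + F/k)^(p+1)` with the concave quadratic
`Q(f) = -f² + (k+1)(k+α)/k · f - kα`. Since `Q(0) < 0 < Q(α)`, `Q` changes sign exactly once on
`[0, α]`, at some `f₀`; as `F` decreases from `α` to `0` on `[0, δ₀]`, `R` increases up to the
`δ₁` with `F(δ₁) = f₀` and decreases after it. Uniqueness of `δ₁` is then pure order theory.
-/

open Filter Topology Set

theorem eq_of_strictMonoOn_Ioc_of_strictAntiOn_Icc {α β : Type*} [LinearOrder α] [Preorder β]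
    {f : α → β} {a b x y : α} (hx : x ∈ Ioo a b) (hy : y ∈ Ioo a b)
    (hfx : StrictMonoOn f (Ioc a x)) (hfx' : StrictAntiOn f (Icc x b))
    (hfy : StrictMonoOn f (Ioc a y)) (hfy' : StrictAntiOn f (Icc y b)) : x = y := by
  by_contra hne
  rcases lt_or_gt_of_ne hne with hxy | hyx
  · exact (hfy ⟨hx.1, hxy.le⟩ ⟨hy.1, le_rfl⟩ hxy).asymm
      (hfx' ⟨le_rfl, hx.2.le⟩ ⟨hxy.le, hy.2.le⟩ hxy)
  · exact (hfx ⟨hy.1, hyx.le⟩ ⟨hx.1, le_rfl⟩ hyx).asymm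
      (hfy' ⟨le_rfl, hy.2.le⟩ ⟨hyx.le, hx.2.le⟩ hyx)

theorem exists_sign_change_of_quadratic {b c A : ℝ} (hc : 0 < c) (hA : 0 < A)
    (hQA : 0 < -A ^ 2 + b * A - c) :
    ∃ f₀ ∈ Ioo 0 A, (∀ f ≤ A, f₀ < f → 0 < -f ^ 2 + b * f - c) ∧
      (∀ f < f₀, -f ^ 2 + b * f - c < 0) := by
  obtain ⟨f₀, hf₀, hQf₀⟩ : ∃ f₀ ∈ Ioo 0 A, -f₀ ^ 2 + b * f₀ - c = 0 :=
    intermediate_value_Ioo hA.le (by fun_prop) ⟨by linarith, hQA⟩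
  have hfactor : ∀ f, -f ^ 2 + b * f - c = (f - f₀) * (b - f - f₀) := fun f => by
    linear_combination hQf₀
  -- the second factor is positive at `f = A`, hence for every `f ≤ A`
  have hb : 0 < b - A - f₀ := by
    rw [hfactor] at hQA
    exact pos_of_mul_pos_right hQA (by linarith [hf₀.2])
  refine ⟨f₀, hf₀, fun f hfA hf => ?_, fun f hf => ?_⟩
  · rw [hfactor]; exact mul_pos (by linarith) (by linarith)
  · rw [hfactor]; exact mul_neg_of_neg_of_pos (by linarith) (by linarith [hf₀.2])

noncomputable def foldF (k : ℕ) (α c δ : ℝ) : ℝ := α - c * δ ^ (k * (k + 1))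

noncomputable def foldR (k : ℕ) (α c δ : ℝ) : ℝ :=
  δ ^ (k + 1) * foldF k α c δ / (1 + foldF k α c δ / k) ^ ((2 * (k : ℝ) + 1) / k)

noncomputable def foldQ (k : ℕ) (α f : ℝ) : ℝ := -f ^ 2 + (k + 1) * (k + α) / k * f - k * α

variable {k : ℕ} {α c δ δ₀ : ℝ}

theorem foldF_zero (hk : k ≠ 0) : foldF k α c 0 = α := by
  simp [foldF, hk]

theorem foldF_le (hc : 0 ≤ c) : foldF k α c δ ≤ α := by
  have := (Nat.even_mul_succ_self k).pow_nonneg δ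
  unfold foldF; nlinarith

theorem continuous_foldF : Continuous (foldF k α c) := by
  unfold foldF; fun_prop

theorem strictAntiOn_foldF (hk : k ≠ 0) (hc : 0 < c) : StrictAntiOn (foldF k α c) (Ici 0) :=
  fun a ha b _ hab => by
    have := pow_lt_pow_left₀ hab ha (Nat.mul_ne_zero hk k.add_one_ne_zero)
    unfold foldF; nlinarith

theorem foldF_rpow_eq_zero (hk : k ≠ 0) (hc : c ≠ 0) (hαc : 0 ≤ α / c) :
    foldF k α c ((α / c) ^ ((1 : ℝ) / ((k : ℝ) * ((k : ℝ) + 1)))) = 0 := by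
  have hm : k * (k + 1) ≠ 0 := Nat.mul_ne_zero hk k.add_one_ne_zero
  rw [foldF, one_div, ← Nat.cast_succ, ← Nat.cast_mul, Real.rpow_inv_natCast_pow hαc hm]
  field_simp
  ring

theorem hasDerivAt_foldF (hδ : δ ≠ 0) :
    HasDerivAt (foldF k α c) (-(k * (k + 1)) * (α - foldF k α c δ) / δ) δ := by
  refine (((hasDerivAt_pow (k * (k + 1)) δ).const_mul c).const_sub α).congr_deriv ?_
  rcases eq_or_ne k 0 with rfl | hk
  · simp
  · rw [foldF, ← pow_sub_one_mul (Nat.mul_ne_zero hk k.add_one_ne_zero)]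
    field_simp
    push_cast
    ring

theorem hasDerivAt_foldR (hk : k ≠ 0) (hδ : δ ≠ 0) (hu : 0 < 1 + foldF k α c δ / k) :
    HasDerivAt (foldR k α c)
      ((k + 1) * δ ^ k * foldQ k α (foldF k α c δ) /
        (1 + foldF k α c δ / k) ^ ((2 * (k : ℝ) + 1) / k + 1)) δ := by
  set p : ℝ := (2 * (k : ℝ) + 1) / k with hp
  have hF := hasDerivAt_foldF (k := k) (α := α) (c := c) hδ
  have hnum := (hasDerivAt_pow (k + 1) δ).mul hF
  have hden := ((hF.div_const (k : ℝ)).const_add 1).rpow_const (p := p) (Or.inl hu.ne')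
  refine (hnum.div hden (Real.rpow_pos_of_pos hu p).ne').congr_deriv ?_
  set u := 1 + foldF k α c δ / k with hu_def
  have hup : u ^ p = u ^ (p - 1) * u := by rw [← Real.rpow_add_one hu.ne']; ring_nf
  have hup1 : u ^ (p + 1) = u ^ (p - 1) * u ^ 2 := by
    rw [← Real.rpow_natCast, ← Real.rpow_add hu]; ring_nf
  have hk0 : (k : ℝ) ≠ 0 := Nat.cast_ne_zero.mpr hk
  simp only [Pi.mul_apply, Nat.add_sub_cancel]
  rw [hup, hup1, foldQ, pow_succ, hu_def, hp]
  field_simp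
  push_cast
  ring

theorem continuousAt_foldR (hu : 0 < 1 + foldF k α c δ / k) : ContinuousAt (foldR k α c) δ := by
  have hF := continuous_foldF (k := k) (α := α) (c := c)
  refine ((continuous_pow _).mul hF).continuousAt.div ?_ (Real.rpow_pos_of_pos hu _).ne'
  exact ((hF.div_const _).const_add 1).continuousAt.rpow_const (Or.inr (by positivity))

theorem tendsto_foldR_zero (hk : k ≠ 0) (hα : 0 ≤ α) :
    Tendsto (foldR k α c) (𝓝[>] 0) (𝓝 0) := by
  have hR := continuousAt_foldR (k := k) (α := α) (c := c) (δ := 0)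
    (by rw [foldF_zero hk]; positivity)
  have hR0 : foldR k α c 0 = 0 := by simp [foldR]
  simpa only [hR0] using hR.tendsto.mono_left (nhdsWithin_le_nhds (s := Ioi 0))

theorem exists_foldQ_sign_change (hk : k ≠ 0) (hα : 0 < α) :
    ∃ f₀ ∈ Ioo 0 α, (∀ f ≤ α, f₀ < f → 0 < foldQ k α f) ∧ (∀ f < f₀, foldQ k α f < 0) := by
  have hk0 : (0 : ℝ) < k := Nat.cast_pos.mpr (Nat.pos_of_ne_zero hk)
  refine exists_sign_change_of_quadratic (by positivity) hα ?_
  have : foldQ k α α = α * (k + α) / k := by rw [foldQ]; field_simp; ring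
  rw [← foldQ, this]
  positivity

theorem strictMonoOn_foldR {s : Set ℝ} (hk : k ≠ 0) (hs : Convex ℝ s)
    (hs_pos : ∀ δ ∈ s, 0 < δ ∧ 0 < 1 + foldF k α c δ / k)
    (hQ : ∀ δ ∈ interior s, 0 < foldQ k α (foldF k α c δ)) : StrictMonoOn (foldR k α c) s := by
  refine strictMonoOn_of_deriv_pos hs
    (fun δ hδ => (continuousAt_foldR (hs_pos δ hδ).2).continuousWithinAt) fun δ hδ => ?_
  obtain ⟨hδ0, hu⟩ := hs_pos δ (interior_subset hδ)
  rw [(hasDerivAt_foldR hk hδ0.ne' hu).deriv]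
  have := hQ δ hδ
  positivity

theorem strictAntiOn_foldR {s : Set ℝ} (hk : k ≠ 0) (hs : Convex ℝ s)
    (hs_pos : ∀ δ ∈ s, 0 < δ ∧ 0 < 1 + foldF k α c δ / k)
    (hQ : ∀ δ ∈ interior s, foldQ k α (foldF k α c δ) < 0) : StrictAntiOn (foldR k α c) s := by
  refine strictAntiOn_of_deriv_neg hs
    (fun δ hδ => (continuousAt_foldR (hs_pos δ hδ).2).continuousWithinAt) fun δ hδ => ?_
  obtain ⟨hδ0, hu⟩ := hs_pos δ (interior_subset hδ)
  rw [(hasDerivAt_foldR hk hδ0.ne' hu).deriv]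
  exact div_neg_of_neg_of_pos (mul_neg_of_pos_of_neg (by positivity) (hQ δ hδ))
    (Real.rpow_pos_of_pos hu _)

theorem foldF_pos (hk : k ≠ 0) (hc : 0 < c) (hFδ₀ : foldF k α c δ₀ = 0) (hδ : 0 ≤ δ)
    (hδδ₀ : δ < δ₀) : 0 < foldF k α c δ :=
  hFδ₀ ▸ strictAntiOn_foldF hk hc hδ (hδ.trans hδδ₀.le) hδδ₀

theorem foldR_pos (hk : k ≠ 0) (hc : 0 < c) (hFδ₀ : foldF k α c δ₀ = 0) (hδ : 0 < δ)
    (hδδ₀ : δ < δ₀) : 0 < foldR k α c δ := by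
  have := foldF_pos hk hc hFδ₀ hδ.le hδδ₀
  unfold foldR
  positivity

theorem existsUnique_foldR_unimodal (hk : k ≠ 0) (hα : 0 < α) (hc : 0 < c) (hδ₀ : 0 < δ₀)
    (hFδ₀ : foldF k α c δ₀ = 0) :
    ∃! δ₁, δ₁ ∈ Ioo 0 δ₀ ∧
      StrictMonoOn (foldR k α c) (Ioc 0 δ₁) ∧ StrictAntiOn (foldR k α c) (Icc δ₁ δ₀) := by
  obtain ⟨f₀, ⟨hf₀, hf₀α⟩, hQpos, hQneg⟩ := exists_foldQ_sign_change hk hα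
  have hF := strictAntiOn_foldF (α := α) hk hc
  obtain ⟨δ₁, hδ₁, hFδ₁⟩ : ∃ δ₁ ∈ Ioo 0 δ₀, foldF k α c δ₁ = f₀ :=
    intermediate_value_Ioo' hδ₀.le continuous_foldF.continuousOn
      (by rw [hFδ₀, foldF_zero hk]; exact ⟨hf₀, hf₀α⟩)
  have hu : ∀ δ ∈ Ioc 0 δ₀, 0 < δ ∧ 0 < 1 + foldF k α c δ / k := fun δ hδ => by
    have := hFδ₀ ▸ hF.antitoneOn hδ.1.le hδ₀.le hδ.2
    exact ⟨hδ.1, by positivity⟩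
  have hmono : StrictMonoOn (foldR k α c) (Ioc 0 δ₁) :=
    strictMonoOn_foldR hk (convex_Ioc _ _) (fun δ hδ => hu δ ⟨hδ.1, hδ.2.trans hδ₁.2.le⟩)
      fun δ hδ => by
        rw [interior_Ioc] at hδ
        exact hQpos _ (foldF_le hc.le) (hFδ₁ ▸ hF hδ.1.le hδ₁.1.le hδ.2)
  have hanti : StrictAntiOn (foldR k α c) (Icc δ₁ δ₀) :=
    strictAntiOn_foldR hk (convex_Icc _ _) (fun δ hδ => hu δ ⟨hδ₁.1.trans_le hδ.1, hδ.2⟩)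
      fun δ hδ => by
        rw [interior_Icc] at hδ
        exact hQneg _ (hFδ₁ ▸ hF hδ₁.1.le (hδ₁.1.trans hδ.1).le hδ.1)
  exact ⟨δ₁, ⟨hδ₁, hmono, hanti⟩, fun y hy =>
    eq_of_strictMonoOn_Ioc_of_strictAntiOn_Icc hy.1 hδ₁ hy.2.1 hy.2.2 hmono hanti⟩

theorem fold_equation_unimodal_general (k : ℕ) (α β φ₀ : ℝ)
    (hk : 1 ≤ k) (hα : 0 < α) (hβ : 0 < β) (hφ₀ : 0 < φ₀) :
    let F : ℝ → ℝ := fun δ => α - β / α * φ₀ * δ ^ (k * (k + 1))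
    let δ₀ : ℝ := (α ^ 2 / (β * φ₀)) ^ ((1 : ℝ) / ((k : ℝ) * ((k : ℝ) + 1)))
    let R : ℝ → ℝ := fun δ =>
      δ ^ (k + 1) * F δ / (1 + F δ / (k : ℝ)) ^ ((2 * (k : ℝ) + 1) / (k : ℝ))
    (∀ δ : ℝ, 0 < δ → δ < δ₀ → 0 < R δ) ∧
    Tendsto R (nhdsWithin 0 (Set.Ioi 0)) (nhds 0) ∧
    R δ₀ = 0 ∧
    (∃! δ₁ : ℝ, δ₁ ∈ Set.Ioo 0 δ₀ ∧
      StrictMonoOn R (Set.Ioc 0 δ₁) ∧ StrictAntiOn R (Set.Icc δ₁ δ₀)) := by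
  intro F δ₀ R
  have hk0 : k ≠ 0 := Nat.one_le_iff_ne_zero.mp hk
  have hc : 0 < β / α * φ₀ := by positivity
  have hδ₀ : 0 < δ₀ := by positivity
  have hFδ₀ : foldF k α (β / α * φ₀) δ₀ = 0 := by
    have hbase : α ^ 2 / (β * φ₀) = α / (β / α * φ₀) := by field_simp
    simp only [δ₀, hbase]
    exact foldF_rpow_eq_zero hk0 hc.ne' (by positivity)
  exact ⟨fun δ hδ hδδ₀ => foldR_pos hk0 hc hFδ₀ hδ hδδ₀, tendsto_foldR_zero hk0 hα.le,
    (by simp [foldR, hFδ₀] : foldR k α (β / α * φ₀) δ₀ = 0),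
    existsUnique_foldR_unimodal hk0 hα hc hδ₀ hFδ₀⟩

/-- Unimodality of the right-hand side `R(δ) = δ^{k+1}F(δ)/(1 + F(δ)/k)^{(2k+1)/k}` of
the fold equation for the `δ₄`-nullcline, where `F(δ) = α − (β/α)φ₀ δ^{k(k+1)}` and
`δ₀ = (α²/(βφ₀))^{1/(k(k+1))}` is the unique positive zero of `F`: `R > 0` on `(0,δ₀)`,
`R → 0` as `δ → 0⁺`, `R(δ₀) = 0`, and there is a unique `δ₁ ∈ (0,δ₀)` such that `R` is
strictly increasing on `(0,δ₁]` and strictly decreasing on `[δ₁,δ₀]`. -/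
theorem fold_equation_unimodal (k : ℕ) (α β φ₀ : ℝ)
    (hk : 1 ≤ k) (hα : 0 < α) (hα1 : α < 1) (hβ : 0 < β) (hφ₀ : 0 < φ₀) :
    let F : ℝ → ℝ := fun δ => α - β / α * φ₀ * δ ^ (k * (k + 1))
    let δ₀ : ℝ := (α ^ 2 / (β * φ₀)) ^ ((1 : ℝ) / ((k : ℝ) * ((k : ℝ) + 1)))
    let R : ℝ → ℝ := fun δ =>
      δ ^ (k + 1) * F δ / (1 + F δ / (k : ℝ)) ^ ((2 * (k : ℝ) + 1) / (k : ℝ))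
    (∀ δ : ℝ, 0 < δ → δ < δ₀ → 0 < R δ) ∧
    Tendsto R (nhdsWithin 0 (Set.Ioi 0)) (nhds 0) ∧
    R δ₀ = 0 ∧
    (∃! δ₁ : ℝ, δ₁ ∈ Set.Ioo 0 δ₀ ∧
      StrictMonoOn R (Set.Ioc 0 δ₁) ∧ StrictAntiOn R (Set.Icc δ₁ δ₀)) :=
  fold_equation_unimodal_general k α β φ₀ hk hα hβ hφ₀
end
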